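/- Existence of a good choice of phases (kernel of Lieb's argument): let h be a Hermitian J×J complex matrix and let W : (Fin J)⁴ → ℂ satisfy W(i,j,k,l) = −W(j,i,k,l) = −W(i,j,l,k), conj(W(i,j,k,l)) = W(k,l,i,j), and W(i,j,i,j) ≥ 0 (real) for all indices. Then there exists θ ∈ [0,1]^J such that Re[ Σ_{n=1}^N ⟨g^θ_n, h g^θ_n⟩ + (1/2) Σ_{m,n=1}^N Σ_{i,j,k,l=1}^J conj(c^θ_{m,i}) conj(c^θ_{n,j}) c^θ_{m,k} c^θ_{n,l} W(i,j,k,l) ] ≤ Σ_{j=1}^J λ_j Re(h_{jj}) + (1/2) Σ_{i,j=1}^J λ_i λ_j W(i,j,i,j). -/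

import Mathlib

open MeasureTheory
open scoped Real

/-- The phase-modulated coefficients `c^θ_{n,j} := e^{2πiθ_j} G⁽ⁿ⁾_j`. -/
noncomputable def phaseCoeff {N J : ℕ} (G : Fin N → EuclideanSpace ℂ (Fin J))
    (θ : Fin J → ℝ) (n : Fin N) (j : Fin J) : ℂ :=
  Complex.exp (2 * π * Complex.I * (θ j : ℂ)) * G n j

/-!
Average over the grid `θ ∈ {0, 1/3, 2/3}^J` instead of the whole cube. In terms of the
density matrix `γ i k = ∑ n, conj (G n i) * G n k`, both energies are trigonometric
polynomials in `θ` with frequencies `e_k - e_j` and `e_k + e_l - e_i - e_j`, whose entries lie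
in `[-2, 2]`; over the grid, as over the cube, such a monomial averages to zero unless its
frequency vanishes. What survives is `∑ j, γ j j * h j j` and the direct plus exchange terms
`γ i i * γ j j * W i j i j + |γ i j|² * W i j j i`. Antisymmetry turns the exchange term into
`-|γ i j|² * W i j i j`, whose real part is nonpositive, so the average is at most the bound
and some grid point is too.
-/

open Complex Finset ComplexConjugate

lemma sum_fin_exp_two_pi_I_mul_div (q : ℕ) (a : ℤ) :
    ∑ s : Fin q, exp (2 * π * I * (a * s / q)) = if (q : ℤ) ∣ a then (q : ℂ) else 0 := by
  rcases eq_or_ne q 0 with rfl | hq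
  · simp
  set ω := exp (2 * π * I * (a / q))
  have hpow : ∀ s : ℕ, exp (2 * π * I * (a * s / q)) = ω ^ s := fun s => by
    rw [← exp_nat_mul]; ring_nf
  have hω : ω = 1 ↔ (q : ℤ) ∣ a := by
    rw [exp_eq_one_iff, dvd_iff_exists_eq_mul_left]
    refine exists_congr fun n => ?_
    rw [← Int.cast_inj (α := ℂ), Int.cast_mul, Int.cast_natCast]
    constructor
    · intro hn
      field_simp at hn
      linear_combination hn
    · intro hn; rw [hn]; field_simp
  rw [Fin.sum_univ_eq_sum_range (fun s => exp (2 * π * I * (a * s / q)))]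
  simp_rw [hpow]
  split_ifs with hdvd
  · simp [hω.mpr hdvd]
  · have hωq : ω ^ q = 1 := by
      rw [← hpow, mul_div_cancel_right₀ _ (Nat.cast_ne_zero.mpr hq), mul_comm]
      exact exp_int_mul_two_pi_mul_I a
    rw [geom_sum_eq (mt hω.mp hdvd), hωq, sub_self, zero_div]

lemma sum_pi_fin_exp_two_pi_I_mul_div {ι : Type*} [Fintype ι] [DecidableEq ι] (q : ℕ)
    (a : ι → ℤ) :
    ∑ t : ι → Fin q, exp (2 * π * I * ∑ j, (a j : ℂ) * (t j : ℕ) / q) =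
      if ∀ j, (q : ℤ) ∣ a j then (q : ℂ) ^ Fintype.card ι else 0 := by
  simp_rw [mul_sum, exp_sum]
  rw [← Fintype.prod_sum fun j (s : Fin q) => exp (2 * π * I * (a j * s / q))]
  simp_rw [sum_fin_exp_two_pi_I_mul_div, prod_ite_zero]
  simp

lemma single_add_single_sub_single_sub_single_eq_zero_iff {ι : Type*} [DecidableEq ι]
    (i j k l : ι) :
    (Pi.single k 1 + Pi.single l 1 - Pi.single i 1 - Pi.single j 1 : ι → ℤ) = 0
      ↔ (k = i ∧ l = j) ∨ (k = j ∧ l = i) := by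
  constructor
  · intro h
    have hk := congrFun h k
    have hl := congrFun h l
    simp only [Pi.sub_apply, Pi.add_apply, Pi.single_apply, Pi.zero_apply] at hk hl
    grind
  · rintro (⟨rfl, rfl⟩ | ⟨rfl, rfl⟩) <;> abel

noncomputable def gridPoint {ι : Type*} (q : ℕ) (t : ι → Fin q) : ι → ℝ :=
  fun j => (t j : ℕ) / q

lemma gridPoint_mem_Icc {ι : Type*} {q : ℕ} (t : ι → Fin q) :
    gridPoint q t ∈ Set.univ.pi fun _ => Set.Icc (0 : ℝ) 1 := fun j _ =>
  ⟨by unfold gridPoint; positivity,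
    div_le_one_of_le₀ (by exact_mod_cast (t j).is_lt.le) (Nat.cast_nonneg q)⟩

lemma sum_exp_gridPoint_quartet {ι : Type*} [Fintype ι] [DecidableEq ι] {q : ℕ} (hq : 2 < q)
    (i j k l : ι) :
    ∑ t : ι → Fin q, exp (2 * π * I * ((gridPoint q t k + gridPoint q t l - gridPoint q t i
        - gridPoint q t j : ℝ) : ℂ))
      = if (k = i ∧ l = j) ∨ (k = j ∧ l = i) then (q : ℂ) ^ Fintype.card ι else 0 := by
  set a : ι → ℤ := Pi.single k 1 + Pi.single l 1 - Pi.single i 1 - Pi.single j 1 with ha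
  have hexponent : ∀ t : ι → Fin q, ((gridPoint q t k + gridPoint q t l - gridPoint q t i
      - gridPoint q t j : ℝ) : ℂ) = ∑ x, (a x : ℂ) * (t x : ℕ) / q := fun t => by
    simp [a, gridPoint, Pi.single_apply, add_mul, sub_mul, add_div, sub_div, sum_add_distrib,
      sum_sub_distrib, ite_div, zero_div]
  -- the entries of `a` lie in `[-2, 2]`, so `q ∣ a x` forces `a x = 0`
  have hdvd : (∀ x, (q : ℤ) ∣ a x) ↔ a = 0 := by
    refine ⟨fun h => funext fun x => Int.eq_zero_of_abs_lt_dvd (h x) ?_,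
      fun h x => by simp [h]⟩
    simp only [a, Pi.sub_apply, Pi.add_apply, Pi.single_apply, abs_lt]
    split_ifs <;> omega
  simp_rw [hexponent, sum_pi_fin_exp_two_pi_I_mul_div, hdvd, ha,
    single_add_single_sub_single_sub_single_eq_zero_iff]

lemma sum_sum_ite_eq_or_swap {ι M : Type*} [Fintype ι] [DecidableEq ι] [AddCommMonoid M]
    (g : ι → ι → M) (i j : ι) (hg : i = j → g i j = 0) :
    ∑ k, ∑ l, (if (k = i ∧ l = j) ∨ (k = j ∧ l = i) then g k l else 0)
      = g i j + g j i := by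
  set s : Finset (ι × ι) := {(i, j), (j, i)}
  have hmem : ∀ k l, ((k = i ∧ l = j) ∨ (k = j ∧ l = i)) ↔ (k, l) ∈ s :=
    fun k l => by simp [s]
  simp_rw [hmem]
  rw [← Fintype.sum_prod_type' fun k l => if (k, l) ∈ s then g k l else 0, sum_ite_mem,
    univ_inter]
  by_cases hij : i = j
  · subst hij; simp [s, hg rfl]
  · rw [sum_pair fun h => hij (Prod.ext_iff.mp h).1]

section Density
variable {N J : ℕ} (G : Fin N → EuclideanSpace ℂ (Fin J))

def densityMatrix (i k : Fin J) : ℂ := ∑ n, conj (G n i) * G n k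

lemma conj_densityMatrix (i k : Fin J) : conj (densityMatrix G i k) = densityMatrix G k i := by
  simp [densityMatrix, mul_comm]

lemma densityMatrix_apply_self (j : Fin J) :
    densityMatrix G j j = ((∑ n, ‖G n j‖ ^ 2 : ℝ) : ℂ) := by
  simp [densityMatrix, mul_conj', ← Complex.ofReal_pow, mul_comm]

lemma conj_mul_phaseCoeff (θ : Fin J → ℝ) (n : Fin N) (i k : Fin J) :
    conj (phaseCoeff G θ n i) * phaseCoeff G θ n k
      = exp (2 * π * I * ((θ k - θ i : ℝ) : ℂ)) * (conj (G n i) * G n k) := by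
  simp only [phaseCoeff, map_mul, ← exp_conj]
  push_cast
  simp only [conj_ofReal, conj_I, map_ofNat]
  rw [show 2 * π * I * (θ k - θ i : ℂ) = 2 * π * I * θ k + -(2 * π * I * θ i) by ring,
    exp_add]
  ring_nf

lemma sum_conj_mul_phaseCoeff (θ : Fin J → ℝ) (i k : Fin J) :
    ∑ n, conj (phaseCoeff G θ n i) * phaseCoeff G θ n k
      = exp (2 * π * I * ((θ k - θ i : ℝ) : ℂ)) * densityMatrix G i k := by
  simp_rw [conj_mul_phaseCoeff, ← mul_sum]; rfl

noncomputable def oneBodyEnergy (h : Matrix (Fin J) (Fin J) ℂ) (θ : Fin J → ℝ) : ℂ :=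
  ∑ n, ∑ j, ∑ k, conj (phaseCoeff G θ n j) * h j k * phaseCoeff G θ n k

noncomputable def twoBodyEnergy (W : Fin J → Fin J → Fin J → Fin J → ℂ) (θ : Fin J → ℝ) : ℂ :=
  ∑ m, ∑ n, ∑ i, ∑ j, ∑ k, ∑ l,
    conj (phaseCoeff G θ m i) * conj (phaseCoeff G θ n j) * phaseCoeff G θ m k
      * phaseCoeff G θ n l * W i j k l

lemma oneBodyEnergy_eq (h : Matrix (Fin J) (Fin J) ℂ) (θ : Fin J → ℝ) :
    oneBodyEnergy G h θ
      = ∑ j, ∑ k,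
          exp (2 * π * I * ((θ k - θ j : ℝ) : ℂ)) * densityMatrix G j k * h j k := by
  simp only [oneBodyEnergy, Finset.sum_comm (γ := Fin N), ← sum_conj_mul_phaseCoeff, sum_mul]
  refine sum_congr rfl fun j _ => sum_congr rfl fun k _ => sum_congr rfl fun n _ => by ring

lemma twoBodyEnergy_eq (W : Fin J → Fin J → Fin J → Fin J → ℂ) (θ : Fin J → ℝ) :
    twoBodyEnergy G W θ
      = ∑ i, ∑ j, ∑ k, ∑ l, exp (2 * π * I * ((θ k + θ l - θ i - θ j : ℝ) : ℂ))
          * densityMatrix G i k * densityMatrix G j l * W i j k l := by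
  have hexp : ∀ i j k l, exp (2 * π * I * ((θ k + θ l - θ i - θ j : ℝ) : ℂ))
      = exp (2 * π * I * ((θ k - θ i : ℝ) : ℂ))
        * exp (2 * π * I * ((θ l - θ j : ℝ) : ℂ)) := by
    intro i j k l
    rw [← exp_add]; push_cast; ring_nf
  simp only [twoBodyEnergy, Finset.sum_comm (γ := Fin N) (α := Fin J), hexp]
  refine sum_congr rfl fun i _ => sum_congr rfl fun j _ => sum_congr rfl fun k _ =>
    sum_congr rfl fun l _ => ?_
  rw [show ∀ a b c d w : ℂ, a * b * c * d * w = (a * c) * (b * d) * w from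
      fun _ _ _ _ _ => by ring, ← sum_conj_mul_phaseCoeff, ← sum_conj_mul_phaseCoeff,
    sum_mul_sum, sum_mul]
  refine sum_congr rfl fun m _ => ?_
  rw [sum_mul]
  refine sum_congr rfl fun n _ => by ring

lemma sum_oneBodyEnergy_gridPoint {q : ℕ} (hq : 2 < q) (h : Matrix (Fin J) (Fin J) ℂ) :
    ∑ t : Fin J → Fin q, oneBodyEnergy G h (gridPoint q t)
      = (q : ℂ) ^ J * ∑ j, densityMatrix G j j * h j j := by
  -- view the frequency `e_k - e_j` as the quartet frequency of `(j, j, k, j)`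
  have hdiff : ∀ (θ : Fin J → ℝ) j k, θ k - θ j = θ k + θ j - θ j - θ j :=
    fun _ _ _ => by ring
  simp only [oneBodyEnergy_eq, hdiff, Finset.sum_comm (γ := Fin J → Fin q), ← sum_mul,
    sum_exp_gridPoint_quartet hq, Fintype.card_fin]
  simp [ite_mul, mul_sum, mul_assoc]

lemma sum_twoBodyEnergy_gridPoint {q : ℕ} (hq : 2 < q)
    (W : Fin J → Fin J → Fin J → Fin J → ℂ) (hW : ∀ i k l, W i i k l = 0) :
    ∑ t : Fin J → Fin q, twoBodyEnergy G W (gridPoint q t)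
      = (q : ℂ) ^ J * ∑ i, ∑ j, (densityMatrix G i i * densityMatrix G j j * W i j i j
          + densityMatrix G i j * densityMatrix G j i * W i j j i) := by
  simp only [twoBodyEnergy_eq, Finset.sum_comm (γ := Fin J → Fin q), ← sum_mul,
    sum_exp_gridPoint_quartet hq, Fintype.card_fin, mul_sum]
  refine sum_congr rfl fun i _ => sum_congr rfl fun j _ => ?_
  rw [mul_add, ← sum_sum_ite_eq_or_swap (fun k l => (q : ℂ) ^ J * (densityMatrix G i k
    * densityMatrix G j l * W i j k l)) i j (fun hij => by simp [hij, hW])]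
  refine sum_congr rfl fun k _ => sum_congr rfl fun l _ => ?_
  split_ifs <;> ring

lemma re_sum_densityMatrix_mul_diag (h : Matrix (Fin J) (Fin J) ℂ) :
    (∑ j, densityMatrix G j j * h j j).re = ∑ j, (∑ n, ‖G n j‖ ^ 2) * (h j j).re := by
  simp only [re_sum, densityMatrix_apply_self, re_ofReal_mul]

lemma re_sum_direct_add_exchange_le (W : Fin J → Fin J → Fin J → Fin J → ℂ)
    (hexch : ∀ i j, W i j j i = -W i j i j) (hnonneg : ∀ i j, 0 ≤ (W i j i j).re) :
    (∑ i, ∑ j, (densityMatrix G i i * densityMatrix G j j * W i j i j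
        + densityMatrix G i j * densityMatrix G j i * W i j j i)).re
      ≤ ∑ i, ∑ j, (∑ n, ‖G n i‖ ^ 2) * (∑ n, ‖G n j‖ ^ 2) * (W i j i j).re := by
  simp only [re_sum]
  refine sum_le_sum fun i _ => sum_le_sum fun j _ => ?_
  rw [densityMatrix_apply_self, densityMatrix_apply_self, ← conj_densityMatrix G i j, mul_conj,
    hexch, ← ofReal_mul]
  have := mul_nonneg (normSq_nonneg (densityMatrix G i j)) (hnonneg i j)
  simp only [mul_neg, add_re, re_ofReal_mul, neg_re]
  linarith

lemma sum_energy_gridPoint_le {q : ℕ} (hq : 2 < q) (h : Matrix (Fin J) (Fin J) ℂ)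
    (W : Fin J → Fin J → Fin J → Fin J → ℂ) (hW : ∀ i k l, W i i k l = 0)
    (hexch : ∀ i j, W i j j i = -W i j i j) (hnonneg : ∀ i j, 0 ≤ (W i j i j).re) :
    ∑ t : Fin J → Fin q,
        (oneBodyEnergy G h (gridPoint q t) + 1 / 2 * twoBodyEnergy G W (gridPoint q t)).re
      ≤ ∑ _t : Fin J → Fin q, ((∑ j, (∑ n, ‖G n j‖ ^ 2) * (h j j).re)
          + 1 / 2 * ∑ i, ∑ j,
            (∑ n, ‖G n i‖ ^ 2) * (∑ n, ‖G n j‖ ^ 2) * (W i j i j).re) := by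
  calc ∑ t : Fin J → Fin q,
        (oneBodyEnergy G h (gridPoint q t) + 1 / 2 * twoBodyEnergy G W (gridPoint q t)).re
      = ((q : ℝ) ^ J : ℝ) * ((∑ j, densityMatrix G j j * h j j).re + 1 / 2 *
          (∑ i, ∑ j, (densityMatrix G i i * densityMatrix G j j * W i j i j
            + densityMatrix G i j * densityMatrix G j i * W i j j i)).re) := by
        rw [← re_sum, sum_add_distrib, ← mul_sum, sum_oneBodyEnergy_gridPoint G hq,
          sum_twoBodyEnergy_gridPoint G hq W hW, mul_left_comm, ← mul_add, ← ofReal_natCast,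
          ← ofReal_pow, re_ofReal_mul, add_re]
        norm_num
    _ ≤ ((q : ℝ) ^ J : ℝ) * ((∑ j, (∑ n, ‖G n j‖ ^ 2) * (h j j).re)
          + 1 / 2 * ∑ i, ∑ j,
            (∑ n, ‖G n i‖ ^ 2) * (∑ n, ‖G n j‖ ^ 2) * (W i j i j).re) := by
        rw [re_sum_densityMatrix_mul_diag]
        gcongr
        exact re_sum_direct_add_exchange_le G W hexch hnonneg
    _ = _ := by simp [mul_add]

end Density

theorem exists_good_phases_general (N J : ℕ)
    (G : Fin N → EuclideanSpace ℂ (Fin J))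
    (h : Matrix (Fin J) (Fin J) ℂ)
    (W : Fin J → Fin J → Fin J → Fin J → ℂ)
    (hW1 : ∀ i j k l, W i j k l = - W j i k l)
    (hW2 : ∀ i j k l, W i j k l = - W i j l k)
    (hW4 : ∀ i j, (W i j i j).im = 0 ∧ 0 ≤ (W i j i j).re) :
    ∃ θ ∈ Set.univ.pi fun _ : Fin J => Set.Icc (0 : ℝ) 1,
      ((∑ n : Fin N, ∑ j : Fin J, ∑ k : Fin J,
          (starRingEnd ℂ) (phaseCoeff G θ n j) * h j k * phaseCoeff G θ n k)
        + (1 / 2) * ∑ m : Fin N, ∑ n : Fin N,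
            ∑ i : Fin J, ∑ j : Fin J, ∑ k : Fin J, ∑ l : Fin J,
              (starRingEnd ℂ) (phaseCoeff G θ m i) * (starRingEnd ℂ) (phaseCoeff G θ n j)
                * phaseCoeff G θ m k * phaseCoeff G θ n l * W i j k l).re
      ≤ (∑ j : Fin J, (∑ n : Fin N, ‖G n j‖ ^ 2) * (h j j).re)
        + (1 / 2) * ∑ i : Fin J, ∑ j : Fin J,
            (∑ n : Fin N, ‖G n i‖ ^ 2) * (∑ n : Fin N, ‖G n j‖ ^ 2) * (W i j i j).re := by
  have hW : ∀ i k l, W i i k l = 0 := fun i k l => by linear_combination hW1 i i k l / 2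
  obtain ⟨t, -, ht⟩ := exists_le_of_sum_le univ_nonempty <| sum_energy_gridPoint_le G
    (q := 3) (by norm_num) h W hW (fun i j => hW2 i j j i) fun i j => (hW4 i j).2
  exact ⟨gridPoint 3 t, gridPoint_mem_Icc t, ht⟩

/-- **Existence of a good choice of phases** (kernel of Lieb's argument): there is some
`θ ∈ [0,1]^J` for which the energy of the phase-modulated Slater determinant is at most
`Σ_j λ_j Re h_{jj} + (1/2) Σ_{i,j} λ_i λ_j W(i,j,i,j)`. -/
theorem exists_good_phases (N J : ℕ) (hN : 0 < N) (hNJ : N ≤ J)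
    (G : Fin N → EuclideanSpace ℂ (Fin J)) (hG : Orthonormal ℂ G)
    (h : Matrix (Fin J) (Fin J) ℂ) (hh : h.IsHermitian)
    (W : Fin J → Fin J → Fin J → Fin J → ℂ)
    (hW1 : ∀ i j k l, W i j k l = - W j i k l)
    (hW2 : ∀ i j k l, W i j k l = - W i j l k)
    (hW3 : ∀ i j k l, (starRingEnd ℂ) (W i j k l) = W k l i j)
    (hW4 : ∀ i j, (W i j i j).im = 0 ∧ 0 ≤ (W i j i j).re) :
    ∃ θ ∈ Set.univ.pi fun _ : Fin J => Set.Icc (0 : ℝ) 1,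
      ((∑ n : Fin N, ∑ j : Fin J, ∑ k : Fin J,
          (starRingEnd ℂ) (phaseCoeff G θ n j) * h j k * phaseCoeff G θ n k)
        + (1 / 2) * ∑ m : Fin N, ∑ n : Fin N,
            ∑ i : Fin J, ∑ j : Fin J, ∑ k : Fin J, ∑ l : Fin J,
              (starRingEnd ℂ) (phaseCoeff G θ m i) * (starRingEnd ℂ) (phaseCoeff G θ n j)
                * phaseCoeff G θ m k * phaseCoeff G θ n l * W i j k l).re
      ≤ (∑ j : Fin J, (∑ n : Fin N, ‖G n j‖ ^ 2) * (h j j).re)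
        + (1 / 2) * ∑ i : Fin J, ∑ j : Fin J,
            (∑ n : Fin N, ‖G n i‖ ^ 2) * (∑ n : Fin N, ‖G n j‖ ^ 2) * (W i j i j).re :=
  exists_good_phases_general N J G h W hW1 hW2 hW4
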